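/- arXiv:2406.14820 — 4 statements merged into one kernel-verified Lean document; each statement's English description precedes it below -/
import Mathlib

section
/- For p ∈ (0,1], λ > 0, μ > 0 with λ < μ, define A_F(λ,μ,p) = (1 + 1/p)·(1/λ) + 1/μ + (2λ³ + λμ² − μλ²)/(μ⁴ − μ²λ²) and A_L(λ,μ,p) = (1 + 1/p)·(1/λ) + 1/(pμ). Then A_F(λ,μ,p) ≥ A_L(λ,μ,p) if and only if p ≥ (1 − ρ²)/(2ρ³ − 2ρ² + ρ + 1), where ρ = λ/μ. -/
open Real

/-!
Multiplying `A_F - A_L` by `μ` and writing `ρ = λ/μ` leaves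
`1 + ρ(2ρ² - ρ + 1)/(1 - ρ²) - 1/p = (p·D(ρ) - (1 - ρ²)) / (p(1 - ρ²))` with
`D(ρ) = 2ρ³ - 2ρ² + ρ + 1`. For `0 ≤ ρ < 1` both `1 - ρ²` and `D(ρ) = 1 + ρ(2ρ² - 2ρ + 1)` are
positive, so the sign of the gap is that of `p·D(ρ) - (1 - ρ²)`.
-/

noncomputable def aopiFCFS (lam mu p : ℝ) : ℝ :=
  (1 + 1 / p) * (1 / lam) + 1 / mu
    + (2 * lam ^ 3 + lam * mu ^ 2 - mu * lam ^ 2) / (mu ^ 4 - mu ^ 2 * lam ^ 2)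

noncomputable def aopiLCFSP (lam mu p : ℝ) : ℝ :=
  (1 + 1 / p) * (1 / lam) + 1 / (p * mu)

lemma two_mul_cube_sub_two_mul_sq_add_self_add_one_pos {ρ : ℝ} (hρ : 0 ≤ ρ) :
    0 < 2 * ρ ^ 3 - 2 * ρ ^ 2 + ρ + 1 := by
  nlinarith [mul_nonneg hρ (sq_nonneg (2 * ρ - 1))]

lemma aopiFCFS_sub_aopiLCFSP {lam mu p : ℝ} (hmu : mu ≠ 0) (hp : p ≠ 0)
    (hlm : lam ^ 2 ≠ mu ^ 2) :
    aopiFCFS lam mu p - aopiLCFSP lam mu p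
      = (p * (2 * (lam / mu) ^ 3 - 2 * (lam / mu) ^ 2 + lam / mu + 1) - (1 - (lam / mu) ^ 2))
        / (p * mu * (1 - (lam / mu) ^ 2)) := by
  have hsq : mu ^ 2 - lam ^ 2 ≠ 0 := sub_ne_zero.2 hlm.symm
  have hden : mu ^ 4 - mu ^ 2 * lam ^ 2 = mu ^ 2 * (mu ^ 2 - lam ^ 2) := by ring
  unfold aopiFCFS aopiLCFSP
  rw [hden]
  field_simp
  ring

theorem aopi_fcfs_ge_lcfsp_iff_general (lam mu p : ℝ) (hlam : 0 < lam) (hmu : 0 < mu)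
    (hlm : lam < mu) (hp0 : 0 < p) :
    ((1 + 1 / p) * (1 / lam) + 1 / mu
        + (2 * lam ^ 3 + lam * mu ^ 2 - mu * lam ^ 2) / (mu ^ 4 - mu ^ 2 * lam ^ 2)
      ≥ (1 + 1 / p) * (1 / lam) + 1 / (p * mu))
    ↔ p ≥ (1 - (lam / mu) ^ 2)
        / (2 * (lam / mu) ^ 3 - 2 * (lam / mu) ^ 2 + lam / mu + 1) := by
  have hsq : lam ^ 2 < mu ^ 2 := pow_lt_pow_left₀ hlm hlam.le two_ne_zero
  have hρ : 0 < 1 - (lam / mu) ^ 2 := by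
    rw [div_pow, sub_pos, div_lt_one (by positivity)]
    exact hsq
  have hD := two_mul_cube_sub_two_mul_sq_add_self_add_one_pos (div_pos hlam hmu).le
  change aopiLCFSP lam mu p ≤ aopiFCFS lam mu p ↔ _
  rw [← sub_nonneg, aopiFCFS_sub_aopiLCFSP hmu.ne' hp0.ne' hsq.ne,
    le_div_iff₀ (by positivity), zero_mul, sub_nonneg, ge_iff_le, div_le_iff₀ hD]

/-- Comparison of average AoPI under FCFS (`A_F`) and LCFSP (`A_L`) policies:
`A_F ≥ A_L` iff the recognition accuracy `p` exceeds the threshold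
`(1 - ρ²)/(2ρ³ - 2ρ² + ρ + 1)` where `ρ = λ/μ`. -/
theorem aopi_fcfs_ge_lcfsp_iff (lam mu p : ℝ) (hlam : 0 < lam) (hmu : 0 < mu)
    (hlm : lam < mu) (hp0 : 0 < p) (hp1 : p ≤ 1) :
    ((1 + 1 / p) * (1 / lam) + 1 / mu
        + (2 * lam ^ 3 + lam * mu ^ 2 - mu * lam ^ 2) / (mu ^ 4 - mu ^ 2 * lam ^ 2)
      ≥ (1 + 1 / p) * (1 / lam) + 1 / (p * mu))
    ↔ p ≥ (1 - (lam / mu) ^ 2)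
        / (2 * (lam / mu) ^ 3 - 2 * (lam / mu) ^ 2 + lam / mu + 1) :=
  aopi_fcfs_ge_lcfsp_iff_general lam mu p hlam hmu hlm hp0
end

section
/- For fixed μ > 0 and p ∈ (0,1], the function λ ↦ (1 + 1/p)·(1/λ) + 1/μ + (2λ³ + λμ² − μλ²)/(μ⁴ − μ²λ²) is convex on the interval (0, μ). -/
open Real Set

/-- The average AoPI under the FCFS policy is convex in the transmission rate `λ` on `(0, μ)`. -/
theorem aopi_fcfs_convexOn_transmission_rate (mu p : ℝ) (hmu : 0 < mu)
    (hp0 : 0 < p) (hp1 : p ≤ 1) :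
    ConvexOn ℝ (Ioo (0 : ℝ) mu)
      (fun lam : ℝ => (1 + 1 / p) * (1 / lam) + 1 / mu
        + (2 * lam ^ 3 + lam * mu ^ 2 - mu * lam ^ 2) / (mu ^ 4 - mu ^ 2 * lam ^ 2)) := by
  set c : ℝ := 1 + 1 / p with hc
  have hc2 : 2 ≤ c := by
    have h1 : 1 ≤ 1 / p := one_le_one_div hp0 hp1
    simp only [hc]; linarith
  have hmu' : mu ≠ 0 := hmu.ne'
  have hint : interior (Ioo (0 : ℝ) mu) = Ioo (0 : ℝ) mu := interior_Ioo
  -- derivatives of the decomposed function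
  have hder1 : ∀ x ∈ Ioo (0 : ℝ) mu,
      HasDerivAt (fun y : ℝ => c * y⁻¹ + (2 / mu - 2 * y / mu ^ 2) + (mu - y)⁻¹ - 2 * (mu + y)⁻¹)
        (-c / x ^ 2 - 2 / mu ^ 2 + 1 / (mu - x) ^ 2 + 2 / (mu + x) ^ 2) x := by
    intro x hx
    have hx0 : x ≠ 0 := ne_of_gt hx.1
    have hxm : mu - x ≠ 0 := sub_ne_zero.mpr (ne_of_gt hx.2)
    have hxp : mu + x ≠ 0 := ne_of_gt (by linarith [hx.1] : (0:ℝ) < mu + x)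
    have h1 : HasDerivAt (fun y : ℝ => c * y⁻¹) (c * (-(x ^ 2)⁻¹)) x :=
      (hasDerivAt_inv hx0).const_mul c
    have h2 : HasDerivAt (fun y : ℝ => 2 / mu - 2 * y / mu ^ 2) (-(2 / mu ^ 2)) x := by
      have h := ((hasDerivAt_id x).const_mul (2 / mu ^ 2)).const_sub (2 / mu)
      have hfun : (fun y : ℝ => 2 / mu - 2 * y / mu ^ 2)
          = (fun y : ℝ => 2 / mu - 2 / mu ^ 2 * id y) := by
        funext y; simp only [id]; ring
      rw [hfun]
      refine h.congr_deriv ?_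
      ring
    have h3 : HasDerivAt (fun y : ℝ => (mu - y)⁻¹) (-(-1) / (mu - x) ^ 2) x :=
      ((hasDerivAt_id x).const_sub mu).inv hxm
    have h4 : HasDerivAt (fun y : ℝ => 2 * (mu + y)⁻¹) (2 * (-1 / (mu + x) ^ 2)) x :=
      (((hasDerivAt_id x).const_add mu).inv hxp).const_mul 2
    have := ((h1.add h2).add h3).sub h4
    refine this.congr_deriv ?_
    field_simp
    ring
  have hder2 : ∀ x ∈ Ioo (0 : ℝ) mu,
      HasDerivAt (fun y : ℝ => -c / y ^ 2 - 2 / mu ^ 2 + 1 / (mu - y) ^ 2 + 2 / (mu + y) ^ 2)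
        (2 * c / x ^ 3 + 2 / (mu - x) ^ 3 - 4 / (mu + x) ^ 3) x := by
    intro x hx
    have hx0 : x ≠ 0 := ne_of_gt hx.1
    have hxm : mu - x ≠ 0 := sub_ne_zero.mpr (ne_of_gt hx.2)
    have hxp : mu + x ≠ 0 := ne_of_gt (by linarith [hx.1] : (0:ℝ) < mu + x)
    have hid : HasDerivAt (fun y : ℝ => y) 1 x := hasDerivAt_id x
    have hq1 : HasDerivAt (fun y : ℝ => y ^ 2) (2 * x ^ 1 * 1) x := hid.pow 2
    have hq2 : HasDerivAt (fun y : ℝ => (mu - y) ^ 2) (2 * (mu - x) ^ 1 * (-1)) x :=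
      (hid.const_sub mu).pow 2
    have hq3 : HasDerivAt (fun y : ℝ => (mu + y) ^ 2) (2 * (mu + x) ^ 1 * 1) x :=
      (hid.const_add mu).pow 2
    have h1 : HasDerivAt (fun y : ℝ => -c / y ^ 2)
        ((0 * x ^ 2 - -c * (2 * x ^ 1 * 1)) / (x ^ 2) ^ 2) x :=
      (hasDerivAt_const x (-c)).div hq1 (pow_ne_zero 2 hx0)
    have h2 : HasDerivAt (fun y : ℝ => 1 / (mu - y) ^ 2)
        ((0 * (mu - x) ^ 2 - 1 * (2 * (mu - x) ^ 1 * (-1))) / ((mu - x) ^ 2) ^ 2) x :=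
      (hasDerivAt_const x (1 : ℝ)).div hq2 (pow_ne_zero 2 hxm)
    have h3 : HasDerivAt (fun y : ℝ => 2 / (mu + y) ^ 2)
        ((0 * (mu + x) ^ 2 - 2 * (2 * (mu + x) ^ 1 * 1)) / ((mu + x) ^ 2) ^ 2) x :=
      (hasDerivAt_const x (2 : ℝ)).div hq3 (pow_ne_zero 2 hxp)
    have := ((h1.sub (hasDerivAt_const x (2 / mu ^ 2))).add h2).add h3
    refine this.congr_deriv ?_
    field_simp
    ring
  have key : ConvexOn ℝ (Ioo (0 : ℝ) mu)
      (fun y : ℝ => c * y⁻¹ + (2 / mu - 2 * y / mu ^ 2) + (mu - y)⁻¹ - 2 * (mu + y)⁻¹) := by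
    apply convexOn_of_hasDerivWithinAt2_nonneg (convex_Ioo 0 mu)
      (f' := fun x => -c / x ^ 2 - 2 / mu ^ 2 + 1 / (mu - x) ^ 2 + 2 / (mu + x) ^ 2)
      (f'' := fun x => 2 * c / x ^ 3 + 2 / (mu - x) ^ 3 - 4 / (mu + x) ^ 3)
    · intro x hx
      exact ((hder1 x hx).continuousAt).continuousWithinAt
    · intro x hx
      rw [hint] at hx ⊢
      exact (hder1 x hx).hasDerivWithinAt
    · intro x hx
      rw [hint] at hx ⊢
      exact (hder2 x hx).hasDerivWithinAt
    · intro x hx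
      rw [hint] at hx
      have hx0 : 0 < x := hx.1
      have hxm : 0 < mu - x := sub_pos.mpr hx.2
      have hxp : 0 < mu + x := by linarith
      have hle : (1 : ℝ) / (mu + x) ^ 3 ≤ 1 / x ^ 3 := by
        apply one_div_le_one_div_of_le (by positivity)
        exact pow_le_pow_left₀ hx0.le (by linarith) 3
      have ha : (0 : ℝ) ≤ 1 / x ^ 3 := by positivity
      have hb : (0 : ℝ) ≤ 1 / (mu - x) ^ 3 := by positivity
      have hd : (0 : ℝ) ≤ 1 / (mu + x) ^ 3 := by positivity
      have e1 : 2 * c / x ^ 3 = 2 * c * (1 / x ^ 3) := by ring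
      have e2 : 2 / (mu - x) ^ 3 = 2 * (1 / (mu - x) ^ 3) := by ring
      have e3 : 4 / (mu + x) ^ 3 = 4 * (1 / (mu + x) ^ 3) := by ring
      rw [e1, e2, e3]
      nlinarith [mul_nonneg (by linarith : (0:ℝ) ≤ c - 2) ha]
  refine key.congr fun lam hlam => ?_
  have hl0 : lam ≠ 0 := ne_of_gt hlam.1
  have hlm : mu - lam ≠ 0 := sub_ne_zero.mpr (ne_of_gt hlam.2)
  have hlp : mu + lam ≠ 0 := ne_of_gt (by linarith [hlam.1] : (0:ℝ) < mu + lam)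
  have hden : mu ^ 4 - mu ^ 2 * lam ^ 2 ≠ 0 := by
    have h : mu ^ 4 - mu ^ 2 * lam ^ 2 = mu ^ 2 * ((mu - lam) * (mu + lam)) := by ring
    rw [h]
    exact mul_ne_zero (pow_ne_zero 2 hmu') (mul_ne_zero hlm hlp)
  have hp' : p ≠ 0 := ne_of_gt hp0
  have hden2 : mu ^ 2 - lam ^ 2 ≠ 0 := by
    have h : mu ^ 2 - lam ^ 2 = (mu - lam) * (mu + lam) := by ring
    rw [h]; exact mul_ne_zero hlm hlp
  simp only [hc]
  field_simp
  ring
end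

section
/- For fixed λ > 0 and p ∈ (0,1], the function μ ↦ (1 + 1/p)·(1/λ) + 1/μ + (2λ³ + λμ² − μλ²)/(μ⁴ − μ²λ²) is strictly decreasing and convex on the interval (λ, ∞). -/
open Real Set

-- partial-fraction form lemma, for any constant K
lemma aopi_aux (lam K : ℝ) (hlam : 0 < lam) :
    StrictAntiOn (fun mu : ℝ => K + 2 / mu - 2 * lam / mu ^ 2 + 1 / (mu - lam) - 2 / (mu + lam))
      (Ioi lam) ∧
    ConvexOn ℝ (Ioi lam)
      (fun mu : ℝ => K + 2 / mu - 2 * lam / mu ^ 2 + 1 / (mu - lam) - 2 / (mu + lam)) := by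
  set g : ℝ → ℝ := fun mu => K + 2 / mu - 2 * lam / mu ^ 2 + 1 / (mu - lam) - 2 / (mu + lam)
    with hg
  set g1 : ℝ → ℝ := fun mu =>
      4 * lam / mu ^ 3 - 2 / mu ^ 2 - 1 / (mu - lam) ^ 2 + 2 / (mu + lam) ^ 2 with hg1
  have hder : ∀ x ∈ Ioi lam, HasDerivAt g (g1 x) x := by
    intro x hx
    have hx0 : (0:ℝ) < x := hlam.trans hx
    have h1 : (0:ℝ) < x - lam := sub_pos.mpr hx
    have h2 : (0:ℝ) < x + lam := by linarith
    have hx' : x ≠ 0 := ne_of_gt hx0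
    have h1' : x - lam ≠ 0 := ne_of_gt h1
    have h2' : x + lam ≠ 0 := ne_of_gt h2
    have H := ((((hasDerivAt_const x K).add
        ((hasDerivAt_const x (2:ℝ)).div (hasDerivAt_id x) hx')).sub
        ((hasDerivAt_const x (2*lam)).div ((hasDerivAt_id x).pow 2) (pow_ne_zero 2 hx'))).add
        ((hasDerivAt_const x (1:ℝ)).div ((hasDerivAt_id x).sub_const lam) h1')).sub
        ((hasDerivAt_const x (2:ℝ)).div ((hasDerivAt_id x).add_const lam) h2')
    convert H using 1
    · rfl
    · rfl
    · rfl
    simp only [hg1, id_eq, Pi.pow_apply]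
    field_simp
    ring
  have hder2 : ∀ x ∈ Ioi lam, HasDerivAt g1 (4 / x ^ 3 - 12 * lam / x ^ 4
      + 2 / (x - lam) ^ 3 - 4 / (x + lam) ^ 3) x := by
    intro x hx
    have hx0 : (0:ℝ) < x := hlam.trans hx
    have h1 : (0:ℝ) < x - lam := sub_pos.mpr hx
    have h2 : (0:ℝ) < x + lam := by linarith
    have hx' : x ≠ 0 := ne_of_gt hx0
    have h1' : x - lam ≠ 0 := ne_of_gt h1
    have h2' : x + lam ≠ 0 := ne_of_gt h2
    have H := ((((hasDerivAt_const x (4*lam)).div ((hasDerivAt_id x).pow 3)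
          (pow_ne_zero 3 hx')).sub
        ((hasDerivAt_const x (2:ℝ)).div ((hasDerivAt_id x).pow 2) (pow_ne_zero 2 hx'))).sub
        ((hasDerivAt_const x (1:ℝ)).div (((hasDerivAt_id x).sub_const lam).pow 2)
          (pow_ne_zero 2 h1'))).add
        ((hasDerivAt_const x (2:ℝ)).div (((hasDerivAt_id x).add_const lam).pow 2)
          (pow_ne_zero 2 h2'))
    convert H using 1
    · rfl
    · rfl
    · rfl
    simp only [id_eq, Pi.pow_apply]
    field_simp
    ring
  have hg1neg : ∀ x ∈ Ioi lam, g1 x < 0 := by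
    intro x hx
    have hx0 : (0:ℝ) < x := hlam.trans hx
    have h1 : (0:ℝ) < x - lam := sub_pos.mpr hx
    have h2 : (0:ℝ) < x + lam := by linarith
    have s1 : 2 / (x + lam) ^ 2 < 2 / x ^ 2 := by
      apply div_lt_div_of_pos_left two_pos (pow_pos hx0 2)
      nlinarith
    have s2 : 4 * lam / x ^ 3 < 1 / (x - lam) ^ 2 := by
      rw [div_lt_div_iff₀ (pow_pos hx0 3) (pow_pos h1 2)]
      nlinarith [mul_nonneg h1.le (sq_nonneg (2*(x-lam) - lam)), mul_pos h1 (mul_pos hlam hlam),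
        mul_pos (mul_pos hlam hlam) hlam]
    simp only [hg1]
    linarith
  have hg2pos : ∀ x ∈ Ioi lam, 0 ≤ 4 / x ^ 3 - 12 * lam / x ^ 4
      + 2 / (x - lam) ^ 3 - 4 / (x + lam) ^ 3 := by
    intro x hx
    have hx0 : (0:ℝ) < x := hlam.trans hx
    have h1 : (0:ℝ) < x - lam := sub_pos.mpr hx
    have h2 : (0:ℝ) < x + lam := by linarith
    have t1 : 4 / (x + lam) ^ 3 < 4 / x ^ 3 := by
      apply div_lt_div_of_pos_left (by norm_num) (pow_pos hx0 3)
      nlinarith [mul_pos (mul_pos hx0 hx0) hlam, mul_pos (mul_pos hx0 hlam) hlam, mul_pos (mul_pos hlam hlam) hlam]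
    have t2 : 12 * lam / x ^ 4 ≤ 2 / (x - lam) ^ 3 := by
      rw [div_le_div_iff₀ (pow_pos hx0 4) (pow_pos h1 3)]
      nlinarith [sq_nonneg ((x - lam) * (x - 2*lam)), sq_nonneg (lam * (x - lam)),
        mul_pos (mul_pos (mul_pos hlam hlam) hlam) h1, pow_pos hlam 4]
    linarith
  constructor
  · apply strictAntiOn_of_deriv_neg (convex_Ioi lam)
    · exact fun x hx => (hder x hx).continuousAt.continuousWithinAt
    · intro x hx
      rw [interior_Ioi] at hx
      rw [(hder x hx).deriv]
      exact hg1neg x hx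
  · apply convexOn_of_deriv2_nonneg (convex_Ioi lam)
    · exact fun x hx => (hder x hx).continuousAt.continuousWithinAt
    · intro x hx
      rw [interior_Ioi] at hx
      exact (hder x hx).differentiableAt.differentiableWithinAt
    · intro x hx
      rw [interior_Ioi] at hx
      have hev : deriv g =ᶠ[nhds x] g1 :=
        Filter.eventuallyEq_of_mem (isOpen_Ioi.mem_nhds hx) (fun y hy => (hder y hy).deriv)
      exact (((hder2 x hx).congr_of_eventuallyEq hev)).differentiableAt.differentiableWithinAt
    · intro x hx
      rw [interior_Ioi] at hx
      have hev : deriv g =ᶠ[nhds x] g1 :=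
        Filter.eventuallyEq_of_mem (isOpen_Ioi.mem_nhds hx) (fun y hy => (hder y hy).deriv)
      have H2 : HasDerivAt (deriv g) (4 / x ^ 3 - 12 * lam / x ^ 4
          + 2 / (x - lam) ^ 3 - 4 / (x + lam) ^ 3) x :=
        (hder2 x hx).congr_of_eventuallyEq hev
      show 0 ≤ deriv (deriv g) x
      rw [H2.deriv]
      exact hg2pos x hx

/-- The average AoPI under the FCFS policy is strictly decreasing and convex in the
computation rate `μ` on `(λ, ∞)`. -/
theorem aopi_fcfs_strictAnti_convexOn_computation_rate (lam p : ℝ) (hlam : 0 < lam)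
    (hp0 : 0 < p) (hp1 : p ≤ 1) :
    StrictAntiOn
      (fun mu : ℝ => (1 + 1 / p) * (1 / lam) + 1 / mu
        + (2 * lam ^ 3 + lam * mu ^ 2 - mu * lam ^ 2) / (mu ^ 4 - mu ^ 2 * lam ^ 2))
      (Ioi lam) ∧
    ConvexOn ℝ (Ioi lam)
      (fun mu : ℝ => (1 + 1 / p) * (1 / lam) + 1 / mu
        + (2 * lam ^ 3 + lam * mu ^ 2 - mu * lam ^ 2) / (mu ^ 4 - mu ^ 2 * lam ^ 2)) := by
  set K := (1 + 1 / p) * (1 / lam) with hK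
  obtain ⟨hA, hC⟩ := aopi_aux lam K hlam
  have heq : ∀ x ∈ Ioi lam,
      (1 + 1 / p) * (1 / lam) + 1 / x
        + (2 * lam ^ 3 + lam * x ^ 2 - x * lam ^ 2) / (x ^ 4 - x ^ 2 * lam ^ 2)
      = K + 2 / x - 2 * lam / x ^ 2 + 1 / (x - lam) - 2 / (x + lam) := by
    intro x hx
    have hx0 : (0:ℝ) < x := hlam.trans hx
    have h1 : (0:ℝ) < x - lam := sub_pos.mpr hx
    have h2 : (0:ℝ) < x + lam := by linarith
    have hden : x ^ 4 - x ^ 2 * lam ^ 2 ≠ 0 := by nlinarith [pow_pos hx0 2, mul_pos h1 h2, mul_pos (pow_pos hx0 2) (mul_pos h1 h2)]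
    have hden2 : x ^ 2 - lam ^ 2 ≠ 0 := ne_of_gt (by nlinarith [mul_pos h1 h2])
    rw [hK]
    field_simp
    ring
  constructor
  · intro a ha b hb hab
    simp only
    rw [heq a ha, heq b hb]
    exact hA ha hb hab
  · refine ⟨convex_Ioi lam, fun x hx y hy a b ha hb hab => ?_⟩
    have hmem : a • x + b • y ∈ Ioi lam := (convex_Ioi lam) hx hy ha hb hab
    simp only [smul_eq_mul] at *
    rw [heq x hx, heq y hy, heq _ hmem]
    exact hC.2 hx hy ha hb hab
end

section
/- For λ, μ > 0 with λ < μ and p ∈ (0,1], A_F(λ,μ,p) − A_L(λ,μ,p) = (2λ³ + λμ² − μλ²)/(μ⁴ − μ²λ²) + 1/μ − 1/(pμ), and this difference has the same sign as p·(2ρ³ − 2ρ² + ρ + 1) − (1 − ρ²) where ρ = λ/μ. -/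
/-! The common term `(1 + 1/p)/λ` cancels from `A_F − A_L`, and what remains factors as
`(p·(2ρ³ − 2ρ² + ρ + 1) − (1 − ρ²)) · μ / (p (μ² − λ²))`, whose second factor is positive
in the stable regime `0 < λ < μ`. -/

lemma aopi_difference_eq_mul (lam mu p : ℝ) (hmu : mu ≠ 0) (hp : p ≠ 0)
    (hlm : mu ^ 2 - lam ^ 2 ≠ 0) :
    (2 * lam ^ 3 + lam * mu ^ 2 - mu * lam ^ 2) / (mu ^ 4 - mu ^ 2 * lam ^ 2)
        + 1 / mu - 1 / (p * mu)
      = (p * (2 * (lam / mu) ^ 3 - 2 * (lam / mu) ^ 2 + lam / mu + 1) - (1 - (lam / mu) ^ 2))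
        * (mu / (p * (mu ^ 2 - lam ^ 2))) := by
  have hden : mu ^ 4 - mu ^ 2 * lam ^ 2 = mu ^ 2 * (mu ^ 2 - lam ^ 2) := by ring
  rw [hden]
  field_simp
  ring

theorem aopi_policy_difference_sign_general (lam mu p : ℝ) (hlam : 0 < lam) (hmu : 0 < mu)
    (hlm : lam < mu) (hp0 : 0 < p) :
    ((1 + 1 / p) * (1 / lam) + 1 / mu
        + (2 * lam ^ 3 + lam * mu ^ 2 - mu * lam ^ 2) / (mu ^ 4 - mu ^ 2 * lam ^ 2))
      - ((1 + 1 / p) * (1 / lam) + 1 / (p * mu))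
      = (2 * lam ^ 3 + lam * mu ^ 2 - mu * lam ^ 2) / (mu ^ 4 - mu ^ 2 * lam ^ 2)
        + 1 / mu - 1 / (p * mu) ∧
    (0 < ((1 + 1 / p) * (1 / lam) + 1 / mu
        + (2 * lam ^ 3 + lam * mu ^ 2 - mu * lam ^ 2) / (mu ^ 4 - mu ^ 2 * lam ^ 2))
      - ((1 + 1 / p) * (1 / lam) + 1 / (p * mu))
      ↔ 0 < p * (2 * (lam / mu) ^ 3 - 2 * (lam / mu) ^ 2 + lam / mu + 1)
          - (1 - (lam / mu) ^ 2)) ∧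
    (((1 + 1 / p) * (1 / lam) + 1 / mu
        + (2 * lam ^ 3 + lam * mu ^ 2 - mu * lam ^ 2) / (mu ^ 4 - mu ^ 2 * lam ^ 2))
      - ((1 + 1 / p) * (1 / lam) + 1 / (p * mu)) = 0
      ↔ p * (2 * (lam / mu) ^ 3 - 2 * (lam / mu) ^ 2 + lam / mu + 1)
          - (1 - (lam / mu) ^ 2) = 0) := by
  have hcancel : ((1 + 1 / p) * (1 / lam) + 1 / mu
        + (2 * lam ^ 3 + lam * mu ^ 2 - mu * lam ^ 2) / (mu ^ 4 - mu ^ 2 * lam ^ 2))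
      - ((1 + 1 / p) * (1 / lam) + 1 / (p * mu))
      = (2 * lam ^ 3 + lam * mu ^ 2 - mu * lam ^ 2) / (mu ^ 4 - mu ^ 2 * lam ^ 2)
        + 1 / mu - 1 / (p * mu) := by ring
  have hsq : 0 < mu ^ 2 - lam ^ 2 := by nlinarith
  have hfactor : 0 < mu / (p * (mu ^ 2 - lam ^ 2)) := by positivity
  rw [hcancel, aopi_difference_eq_mul lam mu p hmu.ne' hp0.ne' hsq.ne']
  exact ⟨rfl, mul_pos_iff_of_pos_right hfactor, mul_eq_zero_iff_right hfactor.ne'⟩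

/-- The difference `A_F − A_L` between the FCFS and LCFSP AoPI equals
`(2λ³+λμ²−μλ²)/(μ⁴−μ²λ²) + 1/μ − 1/(pμ)` and has the same sign as
`p·(2ρ³ − 2ρ² + ρ + 1) − (1 − ρ²)` where `ρ = λ/μ`. -/
theorem aopi_policy_difference_sign (lam mu p : ℝ) (hlam : 0 < lam) (hmu : 0 < mu)
    (hlm : lam < mu) (hp0 : 0 < p) (hp1 : p ≤ 1) :
    ((1 + 1 / p) * (1 / lam) + 1 / mu
        + (2 * lam ^ 3 + lam * mu ^ 2 - mu * lam ^ 2) / (mu ^ 4 - mu ^ 2 * lam ^ 2))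
      - ((1 + 1 / p) * (1 / lam) + 1 / (p * mu))
      = (2 * lam ^ 3 + lam * mu ^ 2 - mu * lam ^ 2) / (mu ^ 4 - mu ^ 2 * lam ^ 2)
        + 1 / mu - 1 / (p * mu) ∧
    (0 < ((1 + 1 / p) * (1 / lam) + 1 / mu
        + (2 * lam ^ 3 + lam * mu ^ 2 - mu * lam ^ 2) / (mu ^ 4 - mu ^ 2 * lam ^ 2))
      - ((1 + 1 / p) * (1 / lam) + 1 / (p * mu))
      ↔ 0 < p * (2 * (lam / mu) ^ 3 - 2 * (lam / mu) ^ 2 + lam / mu + 1)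
          - (1 - (lam / mu) ^ 2)) ∧
    (((1 + 1 / p) * (1 / lam) + 1 / mu
        + (2 * lam ^ 3 + lam * mu ^ 2 - mu * lam ^ 2) / (mu ^ 4 - mu ^ 2 * lam ^ 2))
      - ((1 + 1 / p) * (1 / lam) + 1 / (p * mu)) = 0
      ↔ p * (2 * (lam / mu) ^ 3 - 2 * (lam / mu) ^ 2 + lam / mu + 1)
          - (1 - (lam / mu) ^ 2) = 0) :=
  aopi_policy_difference_sign_general lam mu p hlam hmu hlm hp0
end
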